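/- arXiv:2110.09740 — 11 statements merged into one kernel-verified Lean document; each statement's English description precedes it below -/
import Mathlib

section
/- Let P be a left-cancellative monoid. For a subset X ⊆ P and p ∈ P define pX := {p·x : x ∈ X} and p⁻¹X := {y ∈ P : p·y ∈ X}. Then for all p, q ∈ P and every subset X ⊆ P one has q⁻¹(p(p⁻¹(qX))) = (q⁻¹(pP)) ∩ X. -/
/-- Li's constructible-ideal identity (n = 1 case): in a left-cancellative monoid,
`q⁻¹(p(p⁻¹(qX))) = (q⁻¹(pP)) ∩ X` for all `p, q` and every subset `X`, where
`pX` is the image and `p⁻¹X` the preimage of left multiplication by `p`. -/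
theorem stmt4 {P : Type*} [Monoid P] [IsLeftCancelMul P] (p q : P) (X : Set P) :
    {y : P | q * y ∈ (fun x => p * x) '' {z : P | p * z ∈ (fun x => q * x) '' X}}
      = {y : P | q * y ∈ (fun x => p * x) '' (Set.univ : Set P)} ∩ X := by
  ext y
  constructor
  · rintro ⟨z, ⟨x, hx, hqx⟩, hz⟩
    refine ⟨⟨z, trivial, hz⟩, ?_⟩
    have : x = y := mul_left_cancel (hqx.trans hz)
    rwa [← this]
  · rintro ⟨⟨u, -, hu⟩, hy⟩
    exact ⟨u, ⟨y, hy, hu.symm⟩, hu⟩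
end

section
/- Let P be a submonoid of a group G and let p₁, q₁, p₂, q₂ ∈ P satisfy p₁⁻¹q₁p₂⁻¹q₂ = e in G. Then, with the operations pX := {px : x ∈ X} and p⁻¹X := {y ∈ P : py ∈ X} taken inside P, one has the equality of subsets of P: q₂⁻¹(p₂(q₁⁻¹(p₁P))) = p₁⁻¹(q₁(p₂⁻¹(q₂P))). -/
/-- If `p₁⁻¹q₁p₂⁻¹q₂ = e` in the ambient group, then the constructible right ideal of the
submonoid `P` associated to this word equals the one of the reversed word:
`q₂⁻¹(p₂(q₁⁻¹(p₁P))) = p₁⁻¹(q₁(p₂⁻¹(q₂P)))`, with images and preimages of left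
multiplications computed inside `P`. -/
theorem stmt5 {G : Type*} [Group G] (P : Submonoid G) (p₁ q₁ p₂ q₂ : P)
    (h : (p₁ : G)⁻¹ * q₁ * (p₂ : G)⁻¹ * q₂ = 1) :
    {y : P | q₂ * y ∈ (fun x => p₂ * x) ''
        {z : P | q₁ * z ∈ (fun x => p₁ * x) '' (Set.univ : Set P)}}
      = {y : P | p₁ * y ∈ (fun x => q₁ * x) ''
        {z : P | p₂ * z ∈ (fun x => q₂ * x) '' (Set.univ : Set P)}} := by
  have hq₂ : (q₂ : G) = p₂ * (q₁ : G)⁻¹ * p₁ := by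
    have h2 : (q₂ : G) = ((p₁ : G)⁻¹ * q₁ * (p₂ : G)⁻¹)⁻¹ := eq_inv_of_mul_eq_one_right h
    rw [h2]; group
  ext y
  simp only [Set.mem_setOf_eq, Set.image_univ, Set.mem_image, Set.mem_range]
  constructor
  · rintro ⟨z, ⟨w, hw⟩, hz⟩
    refine ⟨z, ⟨y, hz.symm⟩, ?_⟩
    have hz' : (p₂ : G) * z = q₂ * y := congrArg Subtype.val hz
    ext
    push_cast
    rw [hq₂] at hz'
    have : (z : G) = (q₁ : G)⁻¹ * p₁ * y := by
      have := congrArg (fun x => (p₂ : G)⁻¹ * x) hz'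
      simpa [mul_assoc] using this
    rw [this]; group
  · rintro ⟨z, ⟨w, hw⟩, hz⟩
    refine ⟨z, ⟨y, hz.symm⟩, ?_⟩
    have hz' : (q₁ : G) * z = p₁ * y := congrArg Subtype.val hz
    ext
    push_cast
    rw [hq₂]
    have : (z : G) = (q₁ : G)⁻¹ * p₁ * y := by
      have := congrArg (fun x => (q₁ : G)⁻¹ * x) hz'
      simpa [mul_assoc] using this
    rw [this]; group
end

section
/- Let P be a submonoid of a group G and let p₁, q₁, p₂, q₂ ∈ P satisfy p₁⁻¹q₁p₂⁻¹q₂ = e in G. Then the operator V_{p₁}* V_{q₁} V_{p₂}* V_{q₂} on ℓ²(P) equals the orthogonal projection onto the closed linear span of {δ_r : r ∈ q₂⁻¹(p₂(q₁⁻¹(p₁P)))}, where pX and p⁻¹X denote image and preimage of left multiplication by p inside P, and V_p δ_s = δ_{ps}. -/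
noncomputable section

open scoped ComplexInnerProductSpace

/-- The closed linear span of `{δ_s : s ∈ X}` in `ℓ²(S)`. -/
def spanDelta {S : Type*} [DecidableEq S] (X : Set S) :
    Submodule ℂ (lp (fun _ : S => ℂ) 2) :=
  (Submodule.span ℂ {f : lp (fun _ : S => ℂ) 2 |
    ∃ s ∈ X, f = lp.single 2 s (1 : ℂ)}).topologicalClosure

private lemma delta_inner {S : Type*} [DecidableEq S] (s : S) (f : lp (fun _ : S => ℂ) 2) :
    ⟪lp.single 2 s (1 : ℂ), f⟫ = f s := by
  rw [lp.inner_single_left]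
  simp [RCLike.inner_apply]

private lemma eq_zero_of_deltas {S : Type*} [DecidableEq S] (f : lp (fun _ : S => ℂ) 2)
    (hf : ∀ s, ⟪lp.single 2 s (1 : ℂ), f⟫ = 0) : f = 0 := by
  apply lp.ext
  funext s
  have := hf s
  rw [delta_inner] at this
  simpa using this

private lemma delta_inner_delta {S : Type*} [DecidableEq S] (u s : S) :
    ⟪lp.single 2 u (1 : ℂ), (lp.single 2 s (1 : ℂ) : lp (fun _ : S => ℂ) 2)⟫ =
      if u = s then 1 else 0 := by
  rw [delta_inner]
  by_cases h : u = s
  · subst h; rw [lp.single_apply_self, if_pos rfl]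
  · rw [lp.single_apply_ne 2 s 1 h, if_neg h]

set_option maxHeartbeats 1000000 in
/-- Li's lemma (n = 2 case): if `p₁⁻¹q₁p₂⁻¹q₂ = e` in `G`, then
`V_{p₁}* V_{q₁} V_{p₂}* V_{q₂}` on `ℓ²(P)` is the orthogonal projection onto the closed
linear span of `{δ_r : r ∈ q₂⁻¹(p₂(q₁⁻¹(p₁P)))}`. -/
theorem stmt6 {G : Type*} [Group G] (P : Submonoid G) [DecidableEq P]
    (V : P → (lp (fun _ : P => ℂ) 2 →L[ℂ] lp (fun _ : P => ℂ) 2))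
    (hV : ∀ p s : P, V p (lp.single 2 s (1 : ℂ)) = lp.single 2 (p * s) (1 : ℂ))
    (p₁ q₁ p₂ q₂ : P) (h : (p₁ : G)⁻¹ * q₁ * (p₂ : G)⁻¹ * q₂ = 1) :
    ∀ x : lp (fun _ : P => ℂ) 2,
      (ContinuousLinearMap.adjoint (V p₁)) ((V q₁)
          ((ContinuousLinearMap.adjoint (V p₂)) ((V q₂) x))) ∈
        spanDelta {y : P | q₂ * y ∈ (fun z => p₂ * z) ''
          {z : P | q₁ * z ∈ (fun w => p₁ * w) '' (Set.univ : Set P)}} ∧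
      x - (ContinuousLinearMap.adjoint (V p₁)) ((V q₁)
          ((ContinuousLinearMap.adjoint (V p₂)) ((V q₂) x))) ∈
        (spanDelta {y : P | q₂ * y ∈ (fun z => p₂ * z) ''
          {z : P | q₁ * z ∈ (fun w => p₁ * w) '' (Set.univ : Set P)}})ᗮ := by
  intro x
  let H := lp (fun _ : P => ℂ) 2
  let d : P → H := fun s => lp.single 2 s (1 : ℂ)
  set X : Set P := {y : P | q₂ * y ∈ (fun z => p₂ * z) ''
    {z : P | q₁ * z ∈ (fun w => p₁ * w) '' (Set.univ : Set P)}} with hX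
  set K : Submodule ℂ H := Submodule.span ℂ {f : H | ∃ s ∈ X, f = d s} with hK
  -- cancellation in P
  have hcan : ∀ p a b : P, p * a = p * b → a = b := by
    intro p a b hab
    apply Subtype.ext
    have : ((p * a : P) : G) = ((p * b : P) : G) := congrArg Subtype.val hab
    push_cast at this
    exact mul_left_cancel this
  -- adjoint on basis vectors, range case
  have hadj1 : ∀ p s : P, ContinuousLinearMap.adjoint (V p) (d (p * s)) = d s := by
    intro p s
    have hz : ContinuousLinearMap.adjoint (V p) (d (p * s)) - d s = 0 := by
      apply eq_zero_of_deltas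
      intro u
      rw [inner_sub_right, ContinuousLinearMap.adjoint_inner_right, hV, delta_inner_delta,
        delta_inner_delta]
      by_cases h' : u = s
      · subst h'; simp
      · rw [if_neg h', if_neg fun hc => h' (hcan p u s hc), sub_zero]
    exact sub_eq_zero.mp hz
  -- adjoint on basis vectors, case outside range
  have hadj0 : ∀ (p : P) (t : P), (∀ s : P, p * s ≠ t) →
      ContinuousLinearMap.adjoint (V p) (d t) = 0 := by
    intro p t ht
    apply eq_zero_of_deltas
    intro u
    rw [ContinuousLinearMap.adjoint_inner_right, hV, delta_inner_delta, if_neg (ht u)]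
  -- the group-theoretic key identity
  have h' : (p₁ : G) = (q₁ : G) * ((p₂ : G)⁻¹ * (q₂ : G)) := by
    rw [mul_assoc, mul_assoc] at h
    exact inv_mul_eq_one.mp h
  have hkey : ∀ r z : P, p₂ * z = q₂ * r → q₁ * z = p₁ * r := by
    intro r z hz
    apply Subtype.ext
    have hz' : (p₂ : G) * z = (q₂ : G) * r := by exact_mod_cast congrArg Subtype.val hz
    push_cast
    calc (q₁ : G) * z = (q₁ : G) * ((p₂ : G)⁻¹ * ((p₂ : G) * z)) := by group
      _ = (q₁ : G) * ((p₂ : G)⁻¹ * ((q₂ : G) * r)) := by rw [hz']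
      _ = ((q₁ : G) * ((p₂ : G)⁻¹ * (q₂ : G))) * r := by group
      _ = (p₁ : G) * r := by rw [← h']
  -- vanishing of T* y for y orthogonal to the deltas
  have hy_inner : ∀ y : H, (∀ r ∈ X, ⟪d r, y⟫ = 0) →
      ContinuousLinearMap.adjoint (V q₂) ((V p₂)
        (ContinuousLinearMap.adjoint (V q₁) ((V p₁) y))) = 0 := by
    intro y hy
    apply eq_zero_of_deltas
    intro s
    rw [ContinuousLinearMap.adjoint_inner_right, hV]
    by_cases hs : s ∈ X
    · obtain ⟨z, -, hz2⟩ := hs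
      simp only at hz2
      have hk := hkey s z hz2
      rw [← hz2, ← ContinuousLinearMap.adjoint_inner_left, hadj1,
        ContinuousLinearMap.adjoint_inner_right, hV, hk,
        ← ContinuousLinearMap.adjoint_inner_left, hadj1]
      exact hy s ⟨z, ⟨s, Set.mem_univ s, hk.symm⟩, hz2⟩
    · by_cases hex : ∃ z : P, p₂ * z = q₂ * s
      · obtain ⟨z, hz2⟩ := hex
        have hnw : ∀ w : P, p₁ * w ≠ q₁ * z := by
          intro w hw
          exact hs ⟨z, ⟨w, Set.mem_univ w, hw⟩, hz2⟩
        rw [← hz2, ← ContinuousLinearMap.adjoint_inner_left, hadj1,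
          ContinuousLinearMap.adjoint_inner_right, hV,
          ← ContinuousLinearMap.adjoint_inner_left, hadj0 p₁ (q₁ * z) hnw, inner_zero_left]
      · push_neg at hex
        rw [← ContinuousLinearMap.adjoint_inner_left, hadj0 p₂ (q₂ * s) hex, inner_zero_left]
  -- abbreviation for the operator applied to x
  set Tx : H := (ContinuousLinearMap.adjoint (V p₁)) ((V q₁)
    ((ContinuousLinearMap.adjoint (V p₂)) ((V q₂) x))) with hTx
  -- identification of spanDelta with double orthogonal
  have hMeq : spanDelta X = Kᗮᗮ := by
    rw [hK, Submodule.orthogonal_orthogonal_eq_closure]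
    rfl
  have hMorth : (spanDelta X)ᗮ = Kᗮ := by
    rw [hMeq, Submodule.triorthogonal_eq_orthogonal]
  constructor
  · -- Tx ∈ spanDelta X
    rw [show (spanDelta {y : P | q₂ * y ∈ (fun z => p₂ * z) ''
        {z : P | q₁ * z ∈ (fun w => p₁ * w) '' (Set.univ : Set P)}}) = spanDelta X from rfl, hMeq,
      Submodule.mem_orthogonal]
    intro y hy
    have hy0 : ∀ r ∈ X, ⟪d r, y⟫ = 0 := fun r hr =>
      (Submodule.mem_orthogonal K y).mp hy _ (Submodule.subset_span ⟨r, hr, rfl⟩)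
    have hg := hy_inner y hy0
    calc ⟪y, Tx⟫
        = ⟪(V p₁) y, (V q₁) ((ContinuousLinearMap.adjoint (V p₂)) ((V q₂) x))⟫ :=
          ContinuousLinearMap.adjoint_inner_right _ _ _
      _ = ⟪ContinuousLinearMap.adjoint (V q₁) ((V p₁) y),
            (ContinuousLinearMap.adjoint (V p₂)) ((V q₂) x)⟫ :=
          (ContinuousLinearMap.adjoint_inner_left _ _ _).symm
      _ = ⟪(V p₂) (ContinuousLinearMap.adjoint (V q₁) ((V p₁) y)), (V q₂) x⟫ :=
          ContinuousLinearMap.adjoint_inner_right _ _ _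
      _ = ⟪ContinuousLinearMap.adjoint (V q₂) ((V p₂)
            (ContinuousLinearMap.adjoint (V q₁) ((V p₁) y))), x⟫ :=
          (ContinuousLinearMap.adjoint_inner_left _ _ _).symm
      _ = 0 := by rw [hg, inner_zero_left]
  · -- x - Tx ∈ (spanDelta X)ᗮ
    rw [show (spanDelta {y : P | q₂ * y ∈ (fun z => p₂ * z) ''
        {z : P | q₁ * z ∈ (fun w => p₁ * w) '' (Set.univ : Set P)}}) = spanDelta X from rfl,
      hMorth, Submodule.mem_orthogonal]
    intro u hu
    induction hu using Submodule.span_induction with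
    | mem f hf =>
      obtain ⟨r, hr, rfl⟩ := hf
      obtain ⟨z, -, hz2⟩ := hr
      simp only at hz2
      have hk := hkey r z hz2
      have hchain : ⟪d r, Tx⟫ = ⟪d r, x⟫ := by
        rw [hTx, ContinuousLinearMap.adjoint_inner_right, hV, ← hk,
          ← ContinuousLinearMap.adjoint_inner_left, hadj1,
          ContinuousLinearMap.adjoint_inner_right, hV, hz2,
          ← ContinuousLinearMap.adjoint_inner_left, hadj1]
      rw [inner_sub_right, hchain, sub_self]
    | zero => rw [inner_zero_left]
    | add f g _ _ hfz hgz => rw [inner_add_left, hfz, hgz, add_zero]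
    | smul a f _ hfz => rw [inner_smul_left, hfz, mul_zero]
end
end

section
/- Let G and H be groups, P a submonoid of G, and γ : G → H a group homomorphism whose restriction to P is injective. Let r ∈ P and g ∈ G. If rP ∩ gP ≠ ∅ (as subsets of G) and r ∉ gP, then γ(r)γ(P) ∩ γ(g)γ(P) ≠ ∅ and γ(r) ∉ γ(g)γ(P). -/
/-- If `γ : G → H` is a group homomorphism injective on the submonoid `P ⊆ G`, `r ∈ P`,
`g ∈ G`, `rP ∩ gP ≠ ∅` and `r ∉ gP`, then `γ(r)γ(P) ∩ γ(g)γ(P) ≠ ∅` and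
`γ(r) ∉ γ(g)γ(P)`. -/
theorem stmt9 {G H : Type*} [Group G] [Group H] (P : Submonoid G) (γ : G →* H)
    (hinj : Set.InjOn γ (P : Set G)) (r : G) (hr : r ∈ P) (g : G)
    (h1 : ((fun x => r * x) '' (P : Set G) ∩ (fun x => g * x) '' (P : Set G)).Nonempty)
    (h2 : r ∉ (fun x => g * x) '' (P : Set G)) :
    ((fun y => γ r * y) '' (γ '' (P : Set G)) ∩
      (fun y => γ g * y) '' (γ '' (P : Set G))).Nonempty ∧
    γ r ∉ (fun y => γ g * y) '' (γ '' (P : Set G)) := by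
  obtain ⟨x, ⟨a, ha, hax⟩, ⟨b, hb, hbx⟩⟩ := h1
  constructor
  · exact ⟨γ x, ⟨γ a, ⟨a, ha, rfl⟩, by rw [← hax]; simp⟩,
      ⟨γ b, ⟨b, hb, rfl⟩, by rw [← hbx]; simp⟩⟩
  · rintro ⟨_, ⟨p, hp, rfl⟩, hrp⟩
    apply h2
    have key : γ (p * a) = γ b := by
      simp only [map_mul]
      have h3 : γ r * γ a = γ g * γ b := by
        have := congrArg γ (hax.trans hbx.symm)
        simpa using this
      rw [← hrp, mul_assoc] at h3
      exact mul_left_cancel h3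
    have hpa : p * a = b := hinj (mul_mem hp ha) hb key
    refine ⟨p, hp, ?_⟩
    have : r * a = g * (p * a) := by rw [hpa]; exact hax.trans hbx.symm
    have := mul_right_cancel (by rw [this]; group : r * a = (g * p) * a)
    simp [← this]
end

section
/- Let G and H be groups, P a submonoid of G, and γ : G → H a group homomorphism injective on P. Let p₁, q₁, p₂, q₂, r, s ∈ P. If γ(p₁)⁻¹γ(q₁)γ(p₂)⁻¹γ(q₂) = e in H and s = q₁ p₂⁻¹ q₂ r holds in G, then p₁⁻¹ q₁ p₂⁻¹ q₂ = e in G. -/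
/-- If `γ : G → H` is a group homomorphism injective on the submonoid `P ⊆ G`,
`p₁, q₁, p₂, q₂, r, s ∈ P`, `γ(p₁)⁻¹γ(q₁)γ(p₂)⁻¹γ(q₂) = e` in `H` and
`s = q₁ p₂⁻¹ q₂ r` in `G`, then `p₁⁻¹ q₁ p₂⁻¹ q₂ = e` in `G`. -/
theorem stmt10 {G H : Type*} [Group G] [Group H] (P : Submonoid G) (γ : G →* H)
    (hinj : Set.InjOn γ (P : Set G)) (p₁ q₁ p₂ q₂ r s : P)
    (h1 : (γ (p₁ : G))⁻¹ * γ (q₁ : G) * (γ (p₂ : G))⁻¹ * γ (q₂ : G) = 1)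
    (h2 : (s : G) = (q₁ : G) * (p₂ : G)⁻¹ * (q₂ : G) * (r : G)) :
    (p₁ : G)⁻¹ * (q₁ : G) * (p₂ : G)⁻¹ * (q₂ : G) = 1 := by
  have h1' : γ (q₁ : G) * (γ (p₂ : G))⁻¹ * γ (q₂ : G) = γ (p₁ : G) := by
    have := h1
    rw [mul_assoc, mul_assoc, ← mul_assoc (γ (q₁ : G)), inv_mul_eq_iff_eq_mul, mul_one] at this
    exact this
  have hs : γ (s : G) = γ ((p₁ : G) * (r : G)) := by
    rw [h2, map_mul, map_mul, map_mul, map_mul, map_inv, h1']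
  have hseq : (s : G) = (p₁ : G) * (r : G) :=
    hinj s.2 (P.mul_mem p₁.2 r.2) hs
  have key : (q₁ : G) * (p₂ : G)⁻¹ * (q₂ : G) = (p₁ : G) := by
    have : (q₁ : G) * (p₂ : G)⁻¹ * (q₂ : G) * (r : G) = (p₁ : G) * (r : G) := by
      rw [← h2, hseq]
    exact mul_right_cancel this
  rw [mul_assoc, mul_assoc, ← mul_assoc (q₁ : G), key, inv_mul_cancel]
end

section
/- Let A be a C*-algebra and X ⊆ A a closed linear subspace such that x y* z ∈ X for all x, y, z ∈ X. Then the closed linear span of {x y* z : x, y, z ∈ X} equals X. -/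
/-!
The closed span of the triple products lies in `X` because `X` is closed. Conversely, fix
`x ∈ X` and put `a = x* x`. Right multiplication by `a` sends `X` into the triple products, so
right multiplication by any element of the C⋆-algebra generated by `a` sends `X` into their closed
span. Finally `x` is a limit of the elements `x g(a)` with `g t = min 1 (|t| / δ)`, since
`‖x - x g(a)‖² = ‖a (1 - g(a))²‖ ≤ sup_t |t| (1 - g t)² ≤ δ`.
-/

open NonUnitalStarAlgebra

theorem norm_mul_one_sub_min_sq_le {δ : ℝ} (hδ : 0 < δ) (t : ℝ) :
    ‖t * (1 - min 1 (|t| / δ)) ^ 2‖ ≤ δ := by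
  rcases le_or_gt δ |t| with ht | ht
  · rw [min_eq_left ((one_le_div hδ).2 ht)]
    simpa using hδ.le
  · have h₀ : 0 ≤ 1 - min 1 (|t| / δ) := sub_nonneg.2 (min_le_left _ _)
    have h₁ : 1 - min 1 (|t| / δ) ≤ 1 := sub_le_self _ (by positivity)
    calc ‖t * (1 - min 1 (|t| / δ)) ^ 2‖ = |t| * (1 - min 1 (|t| / δ)) ^ 2 := by
          rw [norm_mul, Real.norm_eq_abs, norm_pow, Real.norm_of_nonneg h₀]
      _ ≤ |t| * 1 := by gcongr; exact pow_le_one₀ h₀ h₁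
      _ ≤ δ := by linarith

section CStarAlgebra

variable {A : Type*} [NonUnitalCStarAlgebra A]

theorem star_sub_mul_cfcₙ_mul_sub_mul_cfcₙ (x : A) {g : ℝ → ℝ}
    (hg : ContinuousOn g (quasispectrum ℝ (star x * x))) (hg0 : g 0 = 0) :
    star (x - x * cfcₙ g (star x * x)) * (x - x * cfcₙ g (star x * x)) =
      cfcₙ (fun t => t * (1 - g t) ^ 2) (star x * x) := by
  set a := star x * x with ha
  have hb : IsSelfAdjoint (cfcₙ g a) := cfcₙ_predicate g a
  calc star (x - x * cfcₙ g a) * (x - x * cfcₙ g a)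
      = a - a * cfcₙ g a - cfcₙ g a * a + cfcₙ g a * a * cfcₙ g a := by
        rw [star_sub, star_mul, hb.star_eq, ha]; noncomm_ring
    _ = cfcₙ (fun t => t - t * g t - g t * t + g t * t * g t) a := by
        rw [cfcₙ_add _ _ a, cfcₙ_sub _ _ a, cfcₙ_sub _ _ a, cfcₙ_mul _ g a, cfcₙ_mul g _ a,
          cfcₙ_mul _ g a, cfcₙ_mul g _ a, cfcₙ_id' ℝ a]
    _ = cfcₙ (fun t => t * (1 - g t) ^ 2) a := cfcₙ_congr fun t _ => by ring

theorem mem_closure_mul_elemental_star_mul_self (x : A) :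
    x ∈ closure ((x * ·) '' (elemental ℝ (star x * x) : Set A)) := by
  rw [Metric.mem_closure_iff]
  intro ε hε
  have hδ : 0 < (ε / 2) ^ 2 := by positivity
  set g : ℝ → ℝ := fun t => min 1 (|t| / (ε / 2) ^ 2)
  have hg : Continuous g := by fun_prop
  refine ⟨_, ⟨cfcₙ g (star x * x), cfcₙ_mem_elemental _ _, rfl⟩, ?_⟩
  have h : ‖x - x * cfcₙ g (star x * x)‖ ^ 2 ≤ (ε / 2) ^ 2 := by
    rw [sq, ← CStarRing.norm_star_mul_self,
      star_sub_mul_cfcₙ_mul_sub_mul_cfcₙ x hg.continuousOn (by simp [g])]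
    exact norm_cfcₙ_le fun t _ => norm_mul_one_sub_min_sq_le hδ t
  rw [dist_eq_norm]
  have := (pow_le_pow_iff_left₀ (norm_nonneg _) (by positivity) two_ne_zero).1 h
  linarith

end CStarAlgebra

section RightMultipliers

variable {R A : Type*} [CommSemiring R] [StarRing R] [NonUnitalSemiring A] [StarRing A]
  [Module R A] [SMulCommClass R A A] [StarModule R A]

def rightMultipliersInto (X : Set A) (M : Submodule R A) (hMX : (M : Set A) ⊆ X) :
    NonUnitalStarSubalgebra R A where
  carrier := {b | ∀ u ∈ X, u * b ∈ M ∧ u * star b ∈ M}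
  add_mem' {b c} hb hc u hu := by
    simp only [mul_add, star_add]
    exact ⟨add_mem (hb u hu).1 (hc u hu).1, add_mem (hb u hu).2 (hc u hu).2⟩
  zero_mem' u _ := by simp
  mul_mem' {b c} hb hc u hu := by
    rw [← mul_assoc, star_mul, ← mul_assoc]
    exact ⟨(hc _ (hMX (hb u hu).1)).1, (hb _ (hMX (hc u hu).2)).2⟩
  smul_mem' r b hb u hu := by
    rw [mul_smul_comm, star_smul, mul_smul_comm]
    exact ⟨M.smul_mem r (hb u hu).1, M.smul_mem _ (hb u hu).2⟩
  star_mem' {b} hb u hu := by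
    rw [star_star]
    exact (hb u hu).symm

end RightMultipliers

/-- If `X` is a closed subspace of a C*-algebra with `x y* z ∈ X` for all `x, y, z ∈ X`,
then the closed linear span of `{x y* z : x, y, z ∈ X}` equals `X`. -/
theorem stmt12 {A : Type*} [NormedRing A] [StarRing A] [CStarRing A]
    [NormedAlgebra ℂ A] [StarModule ℂ A] [CompleteSpace A]
    (X : Submodule ℂ A) (hXc : IsClosed (X : Set A))
    (hX : ∀ x ∈ X, ∀ y ∈ X, ∀ z ∈ X, x * star y * z ∈ X) :
    (Submodule.span ℂ {a : A | ∃ x ∈ X, ∃ y ∈ X, ∃ z ∈ X,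
        a = x * star y * z}).topologicalClosure = X := by
  let _ : CStarAlgebra A := {}
  set M := Submodule.span ℂ {a : A | ∃ x ∈ X, ∃ y ∈ X, ∃ z ∈ X, a = x * star y * z}
  have hMX : M ≤ X := Submodule.span_le.2 fun _ ⟨x, hx, y, hy, z, hz, h⟩ => h ▸ hX x hx y hy z hz
  refine le_antisymm (Submodule.topologicalClosure_minimal _ hMX hXc) fun x hx => ?_
  have hxT : star x * x ∈ rightMultipliersInto (X : Set A) (M.restrictScalars ℝ) hMX := by
    intro u hu
    rw [(IsSelfAdjoint.star_mul_self x).star_eq, ← mul_assoc]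
    have h : u * star x * x ∈ M := Submodule.subset_span ⟨u, hu, x, hx, x, hx, rfl⟩
    exact ⟨h, h⟩
  have hmul : Set.MapsTo (x * ·) (elemental ℝ (star x * x)) (closure M) := fun b hb =>
    map_mem_closure (continuous_const_mul x)
      (NonUnitalStarSubalgebra.topologicalClosure_mono
        (adjoin_le (Set.singleton_subset_iff.2 hxT)) hb)
      fun c hc => (hc x hx).1
  exact closure_minimal hmul.image_subset isClosed_closure
    (mem_closure_mul_elemental_star_mul_self x)
end

section
/- Let P be a monoid with left cancellation and let {X_p}_{p ∈ P} be a family of closed subspaces of a C*-algebra B such that A := X_e is a C*-subalgebra of B, X_p · X_q ⊆ X_{pq} for all p, q ∈ P, and X_p* · X_{pq} ⊆ X_q for all p, q ∈ P. If r ∈ P has a (two-sided) inverse r⁻¹ ∈ P, then the adjoint of the closed linear span of A·X_r equals the closed linear span of A·X_{r⁻¹}, i.e. [A·X_r]* = [A·X_{r⁻¹}]. -/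
/-!
For `a ∈ A` and `x ∈ X_r`, the element `z = (a x)*` lies in `X_{r⁻¹}` and
`z z* = x* a* a x ∈ A`. Any `z` with `z z* ∈ A` is a limit of elements of `A z`: with
`w = z z*` and `u = 1 - w / M` for `M` above the spectrum of `w`, the elements `1 - u ^ k`
lie in `A`, and `‖z - (1 - u ^ k) z‖² = ‖u ^ k w u ^ k‖ ≤ M / (k + 1)` by the continuous
functional calculus. Hence `(a x)* ∈ [A·X_{r⁻¹}]`, so `[A·X_r]* ⊆ [A·X_{r⁻¹}]`, and
symmetrically.
-/

theorem one_sub_mul_pow_le_inv {q : ℝ} (hq0 : 0 ≤ q) (hq1 : q ≤ 1) (n : ℕ) :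
    (1 - q) * q ^ n ≤ ((n : ℝ) + 1)⁻¹ := by
  have hgeom : ((n : ℝ) + 1) * q ^ n ≤ ∑ i ∈ Finset.range (n + 1), q ^ i := by
    calc ((n : ℝ) + 1) * q ^ n = ∑ _i ∈ Finset.range (n + 1), q ^ n := by simp
      _ ≤ ∑ i ∈ Finset.range (n + 1), q ^ i :=
        Finset.sum_le_sum fun i hi =>
          pow_le_pow_of_le_one hq0 hq1 (Nat.lt_succ_iff.mp (Finset.mem_range.mp hi))
  have hsum : (1 - q) * ∑ i ∈ Finset.range (n + 1), q ^ i = 1 - q ^ (n + 1) := by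
    rw [mul_comm, geom_sum_mul_neg]
  rw [← one_div, le_div_iff₀ (by positivity)]
  nlinarith [mul_le_mul_of_nonneg_left hgeom (sub_nonneg.mpr hq1), pow_nonneg hq0 (n + 1)]

theorem one_sub_pow_mem_of_one_sub_mem {B S : Type*} [Ring B] [SetLike S B]
    [NonUnitalSubringClass S B] (A : S) {u : B} (hu : 1 - u ∈ A) (k : ℕ) :
    1 - u ^ k ∈ A := by
  induction k with
  | zero => simp [zero_mem A]
  | succ k ih =>
    have : 1 - u ^ (k + 1) = (1 - u) + ((1 - u ^ k) - (1 - u) * (1 - u ^ k)) := by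
      rw [pow_succ']; noncomm_ring
    rw [this]
    exact add_mem hu (sub_mem ih (mul_mem hu ih))

section CStarAlgebra

variable {B : Type*} [CStarAlgebra B]

theorem norm_pow_mul_mul_pow_le {w : B} (hw : IsSelfAdjoint w) {M : ℝ} (hM : 0 < M)
    (hspec : spectrum ℝ w ⊆ Set.Icc 0 M) (k : ℕ) :
    ‖(1 - M⁻¹ • w) ^ k * w * (1 - M⁻¹ • w) ^ k‖ ≤ M / (k + 1) := by
  have hu : 1 - M⁻¹ • w = cfc (fun t : ℝ => 1 - M⁻¹ * t) w := by
    rw [cfc_sub (fun _ : ℝ => (1 : ℝ)) (fun t : ℝ => M⁻¹ * t) w, cfc_const_mul_id M⁻¹ w,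
      cfc_const 1 w, map_one]
  have hcfc : (1 - M⁻¹ • w) ^ k * w * (1 - M⁻¹ • w) ^ k
      = cfc (fun t : ℝ => (1 - M⁻¹ * t) ^ k * t * (1 - M⁻¹ * t) ^ k) w := by
    rw [cfc_mul (fun t : ℝ => (1 - M⁻¹ * t) ^ k * t) _ w, cfc_mul _ (fun t : ℝ => t) w,
      cfc_pow _ k w, cfc_id' ℝ w, hu]
  rw [hcfc]
  refine norm_cfc_le (by positivity) fun t ht => ?_
  obtain ⟨ht0, htM⟩ := hspec ht
  set q := 1 - M⁻¹ * t
  have hq0 : 0 ≤ q := by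
    have : M⁻¹ * t ≤ 1 := by rw [inv_mul_le_iff₀ hM]; linarith
    linarith
  have hq1 : q ≤ 1 := by
    have : 0 ≤ M⁻¹ * t := by positivity
    linarith
  have htq : t = M * (1 - q) := by
    rw [show 1 - q = M⁻¹ * t by ring, ← mul_assoc, mul_inv_cancel₀ hM.ne', one_mul]
  have hqk : q ^ k * q ^ k ≤ q ^ k :=
    mul_le_of_le_one_right (pow_nonneg hq0 k) (pow_le_one₀ hq0 hq1)
  calc ‖q ^ k * t * q ^ k‖ = M * ((1 - q) * (q ^ k * q ^ k)) := by
        rw [Real.norm_of_nonneg (by positivity), htq]; ring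
    _ ≤ M * ((1 - q) * q ^ k) := by gcongr
    _ ≤ M * ((k : ℝ) + 1)⁻¹ := by gcongr; exact one_sub_mul_pow_le_inv hq0 hq1 k
    _ = M / (k + 1) := div_eq_mul_inv _ _ |>.symm

theorem mem_closure_image_mul_right_of_mul_star_mem (A : NonUnitalSubalgebra ℂ B) {z : B}
    (hz : z * star z ∈ A) : z ∈ closure ((· * z) '' (A : Set B)) := by
  set w := z * star z
  have hw : IsSelfAdjoint w := .mul_star_self z
  set M := ‖w‖ * ‖(1 : B)‖ + 1
  have hM : 0 < M := by positivity
  have hspec : spectrum ℝ w ⊆ Set.Icc 0 M := fun t ht =>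
    ⟨by simpa using spectrum_star_mul_self_nonneg (b := star z) t (by simpa using ht),
      (le_abs_self t).trans ((spectrum.norm_le_norm_mul_of_mem ht).trans (by linarith))⟩
  set u := 1 - M⁻¹ • w
  have hu : IsSelfAdjoint u := (IsSelfAdjoint.one B).sub ((IsSelfAdjoint.all _).smul hw)
  have hmem : 1 - u ∈ A := by
    rw [sub_sub_cancel, ← Complex.coe_smul]
    exact A.smul_mem _ hz
  rw [Metric.mem_closure_iff]
  intro ε hε
  obtain ⟨k, hk⟩ := exists_nat_gt (M / ε ^ 2)
  refine ⟨(1 - u ^ k) * z, ⟨_, one_sub_pow_mem_of_one_sub_mem A hmem k, rfl⟩, ?_⟩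
  have hsq : ‖u ^ k * z‖ ^ 2 = ‖u ^ k * w * u ^ k‖ := by
    rw [sq, ← CStarRing.norm_self_mul_star, star_mul, (hu.pow k).star_eq]
    simp only [w, mul_assoc]
  have hlt : ‖u ^ k * z‖ ^ 2 < ε ^ 2 := by
    rw [hsq]
    refine (norm_pow_mul_mul_pow_le hw hM hspec k).trans_lt ?_
    rw [div_lt_iff₀ (by positivity)]
    rw [div_lt_iff₀ (by positivity)] at hk
    nlinarith
  rw [dist_eq_norm, show z - (1 - u ^ k) * z = u ^ k * z by noncomm_ring]
  exact lt_of_pow_lt_pow_left₀ 2 hε.le hlt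

end CStarAlgebra

theorem Submodule.star_mem_of_mem_topologicalClosure_span {R M : Type*} [CommSemiring R]
    [StarRing R] [AddCommMonoid M] [StarAddMonoid M] [Module R M] [StarModule R M]
    [TopologicalSpace M] [ContinuousStar M] [ContinuousAdd M] [ContinuousConstSMul R M]
    {S : Set M} {C : Submodule R M} (hC : IsClosed (C : Set M)) (hS : ∀ s ∈ S, star s ∈ C)
    {v : M} (hv : v ∈ (span R S).topologicalClosure) : star v ∈ C := by
  let T : Submodule R M := C.comap (starLinearEquiv R : M ≃ₗ⋆[R] M).toLinearMap
  have hT : IsClosed (T : Set M) := hC.preimage continuous_star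
  exact topologicalClosure_minimal _ (span_le.mpr fun s hs => hS s hs) hT hv

section ProductSystem

variable {P B : Type*} [Monoid P] [Semigroup B] [StarMul B] {X : P → Set B}

theorem star_mul_mem_of_mul_eq_one (hAstar : ∀ a ∈ X 1, star a ∈ X 1)
    (hadj : ∀ p q : P, ∀ x ∈ X p, ∀ y ∈ X (p * q), star x * y ∈ X q)
    {s s' : P} (hss : s * s' = 1) {a x : B} (ha : a ∈ X 1) (hx : x ∈ X s) :
    star (a * x) ∈ X s' := by
  rw [star_mul]
  exact hadj s s' x hx (star a) (hss ▸ hAstar a ha)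

theorem star_mul_self_mem_one (hAstar : ∀ a ∈ X 1, star a ∈ X 1)
    (hmul : ∀ p q : P, ∀ x ∈ X p, ∀ y ∈ X q, x * y ∈ X (p * q))
    (hadj : ∀ p q : P, ∀ x ∈ X p, ∀ y ∈ X (p * q), star x * y ∈ X q)
    {s : P} {a x : B} (ha : a ∈ X 1) (hx : x ∈ X s) :
    star (a * x) * (a * x) ∈ X 1 := by
  have hax : a * x ∈ X s := by simpa using hmul 1 s a ha x hx
  have h : star a * (a * x) ∈ X (s * 1) := by simpa using hmul 1 s _ (hAstar a ha) _ hax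
  rw [star_mul, mul_assoc]
  exact hadj s 1 x hx _ h

end ProductSystem

theorem stmt13_general {P : Type*} [Monoid P]
    {B : Type*} [NormedRing B] [StarRing B] [CStarRing B]
    [NormedAlgebra ℂ B] [StarModule ℂ B] [CompleteSpace B]
    (X : P → Submodule ℂ B)
    (hAstar : ∀ a ∈ X 1, star a ∈ X 1)
    (hAmul : ∀ a ∈ X 1, ∀ b ∈ X 1, a * b ∈ X 1)
    (hmul : ∀ p q : P, ∀ x ∈ X p, ∀ y ∈ X q, x * y ∈ X (p * q))
    (hadj : ∀ p q : P, ∀ x ∈ X p, ∀ y ∈ X (p * q), star x * y ∈ X q)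
    (r r' : P) (h1 : r * r' = 1) (h2 : r' * r = 1) :
    star '' (((Submodule.span ℂ {b : B | ∃ a ∈ X 1, ∃ x ∈ X r,
        b = a * x}).topologicalClosure : Submodule ℂ B) : Set B)
      = (((Submodule.span ℂ {b : B | ∃ a ∈ X 1, ∃ x ∈ X r',
        b = a * x}).topologicalClosure : Submodule ℂ B) : Set B) := by
  let _ : CStarAlgebra B :=
    { ‹NormedRing B›, ‹StarRing B›, ‹CompleteSpace B›, ‹CStarRing B›,
      ‹NormedAlgebra ℂ B›, ‹StarModule ℂ B› with }
  let A : NonUnitalSubalgebra ℂ B := { X 1 with mul_mem' := fun ha hb => hAmul _ ha _ hb }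
  have key : ∀ s s' : P, s * s' = 1 →
      ∀ v ∈ (Submodule.span ℂ {b | ∃ a ∈ X 1, ∃ x ∈ X s, b = a * x}).topologicalClosure,
        star v ∈
          (Submodule.span ℂ {b | ∃ a ∈ X 1, ∃ x ∈ X s', b = a * x}).topologicalClosure := by
    intro s s' hss v hv
    refine Submodule.star_mem_of_mem_topologicalClosure_span
      (Submodule.isClosed_topologicalClosure _) ?_ hv
    rintro _ ⟨a, ha, x, hx, rfl⟩
    have hz := star_mul_mem_of_mul_eq_one hAstar hadj hss ha hx
    have hzz : star (a * x) * star (star (a * x)) ∈ A := by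
      rw [star_star]; exact star_mul_self_mem_one hAstar hmul hadj ha hx
    rw [← SetLike.mem_coe, Submodule.topologicalClosure_coe]
    refine closure_mono ?_ (mem_closure_image_mul_right_of_mul_star_mem A hzz)
    rintro _ ⟨b, hb, rfl⟩
    exact Submodule.subset_span ⟨b, hb, _, hz, rfl⟩
  ext v
  exact ⟨fun ⟨w, hw, hwv⟩ => hwv ▸ key r r' h1 w hw,
    fun hv => ⟨star v, key r' r h2 v hv, star_star v⟩⟩

/-- For a concrete product system `{X_p}` over a left-cancellative monoid `P` inside a
C*-algebra `B` (with `A := X_e` a C*-subalgebra, `X_p · X_q ⊆ X_{pq}` and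
`X_p* · X_{pq} ⊆ X_q`), if `r ∈ P` has a two-sided inverse `r' ∈ P` then
`[A·X_r]* = [A·X_{r'}]`. -/
theorem stmt13 {P : Type*} [Monoid P] [IsLeftCancelMul P]
    {B : Type*} [NormedRing B] [StarRing B] [CStarRing B]
    [NormedAlgebra ℂ B] [StarModule ℂ B] [CompleteSpace B]
    (X : P → Submodule ℂ B) (hclosed : ∀ p, IsClosed (X p : Set B))
    (hAstar : ∀ a ∈ X 1, star a ∈ X 1)
    (hAmul : ∀ a ∈ X 1, ∀ b ∈ X 1, a * b ∈ X 1)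
    (hmul : ∀ p q : P, ∀ x ∈ X p, ∀ y ∈ X q, x * y ∈ X (p * q))
    (hadj : ∀ p q : P, ∀ x ∈ X p, ∀ y ∈ X (p * q), star x * y ∈ X q)
    (r r' : P) (h1 : r * r' = 1) (h2 : r' * r = 1) :
    star '' (((Submodule.span ℂ {b : B | ∃ a ∈ X 1, ∃ x ∈ X r,
        b = a * x}).topologicalClosure : Submodule ℂ B) : Set B)
      = (((Submodule.span ℂ {b : B | ∃ a ∈ X 1, ∃ x ∈ X r',
        b = a * x}).topologicalClosure : Submodule ℂ B) : Set B) :=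
  stmt13_general X hAstar hAmul hmul hadj r r' h1 h2
end

section
/- Let P be a left-cancellative monoid and let {X_p}_{p ∈ P} be a family of closed subspaces of a C*-algebra B such that: A := X_e is a C*-subalgebra; A·X_p ⊆ X_p, X_p·A ⊆ X_p, and X_p*·X_p ⊆ A for all p; X_p · X_q ⊆ X_{pq} for all p, q; and X_p · X_p* · X_{pq} is contained in the closed linear span of X_p · X_q for all p, q. Then X_p* · X_{pq} ⊆ X_q for all p, q ∈ P. -/
/-!
Put `a = x* x ∈ X_e`. The hypothesis on `X_p X_p* X_{pq}` gives `a (x* y) = x* (x x* y) ∈ x* [X_p X_q] ⊆ X_q`,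
and `X_q` is invariant under left multiplication by `a`. After rescaling to `‖x‖ ≤ 1`, the powers of
`1 - a` act as an approximate unit on the left of `x*`: `‖(1 - a)ⁿ x*‖² = ‖a (1 - a)²ⁿ‖ ≤ 1/(2n)` by the
functional calculus. Hence `x* y` is the limit of `x* y - (1 - a)ⁿ x* y = ∑_{i<n} (1 - a)ⁱ (a x* y) ∈ X_q`,
and `X_q` is closed.
-/

open Filter Topology

lemma nat_mul_mul_one_sub_pow_le_one {s : ℝ} (hs₀ : 0 ≤ s) (hs₁ : s ≤ 1) (m : ℕ) :
    m * (s * (1 - s) ^ m) ≤ 1 := by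
  have hbern : 1 + m * s ≤ (1 + s) ^ m := one_add_mul_le_pow (by linarith) m
  have hpow : 0 ≤ (1 - s) ^ m := pow_nonneg (by linarith) m
  calc m * (s * (1 - s) ^ m) ≤ (1 + m * s) * (1 - s) ^ m := by nlinarith
    _ ≤ (1 + s) ^ m * (1 - s) ^ m := by gcongr
    _ = (1 - s ^ 2) ^ m := by rw [← mul_pow]; ring
    _ ≤ 1 := pow_le_one₀ (by nlinarith) (by nlinarith)

namespace Submodule

variable {R B : Type*} [Ring B]

section Module
variable [Ring R] [Module R B] {Y : Submodule R B} {c : B}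

lemma one_sub_pow_mul_mem (hc : ∀ z ∈ Y, c * z ∈ Y) (n : ℕ) {z : B} (hz : z ∈ Y) :
    (1 - c) ^ n * z ∈ Y := by
  induction n generalizing z with
  | zero => simpa using hz
  | succ n ih =>
    rw [pow_succ, mul_assoc, sub_mul, one_mul]
    exact ih (Y.sub_mem hz (hc z hz))

lemma sub_one_sub_pow_mul_mem (hc : ∀ z ∈ Y, c * z ∈ Y) {w : B} (hw : c * w ∈ Y) (n : ℕ) :
    w - (1 - c) ^ n * w ∈ Y := by
  have hgeom : w - (1 - c) ^ n * w = ∑ i ∈ Finset.range n, (1 - c) ^ i * (c * w) := by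
    rw [← one_sub_mul, ← geom_sum_mul_neg, sub_sub_cancel, Finset.sum_mul, Finset.sum_mul]
    simp only [mul_assoc]
  rw [hgeom]
  exact Y.sum_mem fun i _ => one_sub_pow_mul_mem hc i hw

end Module

lemma mul_mem_of_mem_topologicalClosure_span [CommSemiring R] [Algebra R B] [TopologicalSpace B]
    [IsTopologicalRing B] [ContinuousConstSMul R B] {Y : Submodule R B}
    (hY : IsClosed (Y : Set B)) {S : Set B} {c : B} (hS : ∀ s ∈ S, c * s ∈ Y) {w : B}
    (hw : w ∈ (span R S).topologicalClosure) : c * w ∈ Y :=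
  topologicalClosure_minimal (t := Y.comap (LinearMap.mulLeft R c)) _ (span_le.mpr hS)
    (hY.preimage (continuous_const_mul c)) hw

end Submodule

section CStarAlgebra

variable {B : Type*} [CStarAlgebra B]

lemma nat_mul_norm_one_sub_star_mul_self_pow_mul_star_sq_le_one {x : B} (hx : ‖x‖ ≤ 1) (n : ℕ) :
    2 * n * ‖(1 - star x * x) ^ n * star x‖ ^ 2 ≤ 1 := by
  -- bounding the spectrum by the norm needs `NormOneClass B`, i.e. `B` nontrivial
  nontriviality B
  set a := star x * x
  have hcfc : cfc (fun t : ℝ => (2 * n : ℝ) * (t * (1 - t) ^ (2 * n))) a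
      = (2 * n : ℝ) • ((1 - a) ^ n * a * (1 - a) ^ n) := by
    rw [cfc_const_mul _ _ a, cfc_mul (fun t : ℝ => t) _ a, cfc_pow _ _ a, cfc_sub _ _ a,
      cfc_const_one ℝ a, cfc_id' ℝ a, pow_mul', sq,
      (((Commute.one_left a).sub_left (Commute.refl a)).pow_left n).eq, ← mul_assoc]
  have hsq : ‖(1 - a) ^ n * star x‖ ^ 2 = ‖(1 - a) ^ n * a * (1 - a) ^ n‖ := by
    rw [sq, ← CStarRing.norm_self_mul_star, star_mul, star_star,
      (((IsSelfAdjoint.one B).sub (IsSelfAdjoint.star_mul_self x)).pow n).star_eq]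
    simp only [a, mul_assoc]
  have hbound := norm_cfc_le (a := a) (f := fun t : ℝ => (2 * n : ℝ) * (t * (1 - t) ^ (2 * n)))
    zero_le_one fun t ht => by
      have ht₀ : 0 ≤ t := spectrum_star_mul_self_nonneg t ht
      have ht₁ : t ≤ 1 := by
        have := spectrum.norm_le_norm_of_mem ht
        rw [Real.norm_eq_abs, abs_of_nonneg ht₀, CStarRing.norm_star_mul_self] at this
        nlinarith [norm_nonneg x]
      have hpow : 0 ≤ (1 - t) ^ (2 * n) := pow_nonneg (by linarith) _
      rw [Real.norm_eq_abs, abs_of_nonneg (by positivity)]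
      exact_mod_cast nat_mul_mul_one_sub_pow_le_one ht₀ ht₁ (2 * n)
  rw [hcfc, norm_smul, Real.norm_of_nonneg (by positivity), ← hsq] at hbound
  linarith

lemma tendsto_one_sub_star_mul_self_pow_mul_star {x : B} (hx : ‖x‖ ≤ 1) :
    Tendsto (fun n : ℕ => (1 - star x * x) ^ n * star x) atTop (𝓝 0) := by
  rw [tendsto_zero_iff_norm_tendsto_zero]
  have hsq : Tendsto (fun n : ℕ => ‖(1 - star x * x) ^ n * star x‖ ^ 2) atTop (𝓝 0) := by
    refine squeeze_zero' (.of_forall fun n => by positivity) ?_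
      (tendsto_const_div_atTop_nhds_zero_nat (1 : ℝ))
    filter_upwards [eventually_ge_atTop 1] with n hn
    rw [le_div_iff₀ (by exact_mod_cast hn)]
    nlinarith [nat_mul_norm_one_sub_star_mul_self_pow_mul_star_sq_le_one hx n]
  simpa using hsq.sqrt

lemma star_mul_mem_of_norm_le_one {Y : Submodule ℂ B} (hY : IsClosed (Y : Set B)) {x : B}
    (hx : ‖x‖ ≤ 1) (hxY : ∀ z ∈ Y, star x * x * z ∈ Y) {y : B}
    (hy : star x * x * (star x * y) ∈ Y) : star x * y ∈ Y := by
  have hlim : Tendsto (fun n : ℕ => star x * y - (1 - star x * x) ^ n * (star x * y)) atTop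
      (𝓝 (star x * y)) := by
    simpa [mul_assoc] using
      tendsto_const_nhds.sub ((tendsto_one_sub_star_mul_self_pow_mul_star hx).mul_const y)
  exact hY.mem_of_tendsto hlim (.of_forall (Y.sub_one_sub_pow_mul_mem hxY hy))

lemma star_mul_mem_of_star_mul_self_mul_mem {Y : Submodule ℂ B} (hY : IsClosed (Y : Set B))
    {x : B} (hxY : ∀ z ∈ Y, star x * x * z ∈ Y) {y : B}
    (hy : star x * x * (star x * y) ∈ Y) : star x * y ∈ Y := by
  rcases eq_or_ne x 0 with rfl | hx
  · simp
  set r : ℝ := ‖x‖⁻¹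
  have hr : r ≠ 0 := inv_ne_zero (norm_ne_zero_iff.mpr hx)
  have hstar : star (r • x) = r • star x := by rw [star_smul, star_trivial]
  have hsq : star (r • x) * (r • x) = (r * r) • (star x * x) := by
    rw [hstar, smul_mul_smul_comm]
  have hrx : ‖r • x‖ ≤ 1 := by
    rw [norm_smul, Real.norm_of_nonneg (inv_nonneg.mpr (norm_nonneg x)),
      inv_mul_cancel₀ (norm_ne_zero_iff.mpr hx)]
  have key := star_mul_mem_of_norm_le_one hY hrx
    (fun z hz => by rw [hsq, smul_mul_assoc]; exact Y.smul_of_tower_mem _ (hxY z hz))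
    (y := y) (by
      rw [hsq, hstar, smul_mul_assoc, smul_mul_assoc, mul_smul_comm]
      exact Y.smul_of_tower_mem _ (Y.smul_of_tower_mem _ hy))
  rw [hstar, smul_mul_assoc] at key
  simpa [hr] using Y.smul_of_tower_mem r⁻¹ key

end CStarAlgebra

theorem stmt14_general {P : Type*} [Monoid P]
    {B : Type*} [NormedRing B] [StarRing B] [CStarRing B]
    [NormedAlgebra ℂ B] [StarModule ℂ B] [CompleteSpace B]
    (X : P → Submodule ℂ B) (hclosed : ∀ p, IsClosed (X p : Set B))
    (hleft : ∀ p : P, ∀ a ∈ X 1, ∀ x ∈ X p, a * x ∈ X p)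
    (hinner : ∀ p : P, ∀ x ∈ X p, ∀ y ∈ X p, star x * y ∈ X 1)
    (hfour : ∀ p q : P, ∀ x ∈ X p, ∀ y ∈ X p, ∀ z ∈ X (p * q),
      x * star y * z ∈ (Submodule.span ℂ {b : B | ∃ u ∈ X p, ∃ v ∈ X q,
        b = u * v}).topologicalClosure) :
    ∀ p q : P, ∀ x ∈ X p, ∀ y ∈ X (p * q), star x * y ∈ X q := by
  intro p q x hx y hy
  let _ : CStarAlgebra B := {}
  have hstar_mul : ∀ {u}, u ∈ X p → ∀ v ∈ X q, star x * u * v ∈ X q :=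
    fun hu v hv => hleft q _ (hinner p x hx _ hu) v hv
  refine star_mul_mem_of_star_mul_self_mul_mem (hclosed q) (hstar_mul hx) ?_
  rw [mul_assoc, ← mul_assoc x]
  refine Submodule.mul_mem_of_mem_topologicalClosure_span (hclosed q) ?_ (hfour p q x hx x hx y hy)
  rintro _ ⟨u, hu, v, hv, rfl⟩
  rw [← mul_assoc]
  exact hstar_mul hu v hv

/-- If a family `{X_p}` of closed subspaces of a C*-algebra satisfies: `X_e` is a
C*-subalgebra, each `X_p` is an `X_e`-bimodule with `X_p* · X_p ⊆ X_e`,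
`X_p · X_q ⊆ X_{pq}`, and `X_p · X_p* · X_{pq} ⊆ [X_p · X_q]`, then
`X_p* · X_{pq} ⊆ X_q` for all `p, q`. -/
theorem stmt14 {P : Type*} [Monoid P] [IsLeftCancelMul P]
    {B : Type*} [NormedRing B] [StarRing B] [CStarRing B]
    [NormedAlgebra ℂ B] [StarModule ℂ B] [CompleteSpace B]
    (X : P → Submodule ℂ B) (hclosed : ∀ p, IsClosed (X p : Set B))
    (hAstar : ∀ a ∈ X 1, star a ∈ X 1)
    (hAmul : ∀ a ∈ X 1, ∀ b ∈ X 1, a * b ∈ X 1)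
    (hleft : ∀ p : P, ∀ a ∈ X 1, ∀ x ∈ X p, a * x ∈ X p)
    (hright : ∀ p : P, ∀ x ∈ X p, ∀ a ∈ X 1, x * a ∈ X p)
    (hinner : ∀ p : P, ∀ x ∈ X p, ∀ y ∈ X p, star x * y ∈ X 1)
    (hmul : ∀ p q : P, ∀ x ∈ X p, ∀ y ∈ X q, x * y ∈ X (p * q))
    (hfour : ∀ p q : P, ∀ x ∈ X p, ∀ y ∈ X p, ∀ z ∈ X (p * q),
      x * star y * z ∈ (Submodule.span ℂ {b : B | ∃ u ∈ X p, ∃ v ∈ X q,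
        b = u * v}).topologicalClosure) :
    ∀ p q : P, ∀ x ∈ X p, ∀ y ∈ X (p * q), star x * y ∈ X q :=
  stmt14_general X hclosed hleft hinner hfour
end

section
/- Let P be a submonoid of a group G and let p₁, q₁, p₂, q₂ ∈ P with p₁⁻¹q₁p₂⁻¹q₂ = e in G. If the operator V_{p₁}* V_{q₁} V_{p₂}* V_{q₂} on ℓ²(P) is nonzero, then the set q₂⁻¹(p₂(q₁⁻¹(p₁P))) is nonempty, where pX := {px : x ∈ X} and p⁻¹X := {y ∈ P : py ∈ X} are computed inside P. -/
/-!
If the set were empty, the operator would kill every basis vector `δ_s`: `V_{q₂} δ_s = δ_{q₂ s}`,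
`V_{p₂}*` sends it to `δ_z` when `q₂ s = p₂ z` and to `0` otherwise, `V_{q₁}` then gives
`δ_{q₁ z}`, and `V_{p₁}*` kills this unless `q₁ z ∈ p₁ P`, i.e. unless `s` lies in the set.
An operator on `ℓ²` vanishing on the basis vectors is zero.
-/

open ContinuousLinearMap Function Set

section

variable {α 𝕜 : Type*} [DecidableEq α] [RCLike 𝕜]

lemma lp.eq_zero_of_forall_apply_single_one {F : Type*} [AddCommMonoid F] [Module 𝕜 F]
    [TopologicalSpace F] [T2Space F] (T : lp (fun _ : α => 𝕜) 2 →L[𝕜] F)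
    (hT : ∀ i, T (lp.single 2 i 1) = 0) : T = 0 := by
  refine lp.ext_continuousLinearMap (by norm_num) fun i => ?_
  ext
  simpa using hT i

variable {A : lp (fun _ : α => 𝕜) 2 →L[𝕜] lp (fun _ : α => 𝕜) 2} {f : α → α}

lemma adjoint_apply_single_one_apply (hA : ∀ s, A (lp.single 2 s 1) = lp.single 2 (f s) 1)
    (t u : α) : adjoint A (lp.single 2 t 1) u = if f u = t then 1 else 0 := by
  have hcoord : adjoint A (lp.single 2 t 1) u
      = inner 𝕜 (lp.single 2 u (1 : 𝕜)) (adjoint A (lp.single 2 t 1)) := by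
    simp [lp.inner_single_left]
  rw [hcoord, adjoint_inner_right, hA, lp.inner_single_left, lp.single_apply]
  simp [Pi.single_apply]

lemma adjoint_apply_single_one_of_notMem_range
    (hA : ∀ s, A (lp.single 2 s 1) = lp.single 2 (f s) 1) {t : α} (ht : t ∉ range f) :
    adjoint A (lp.single 2 t 1) = 0 := by
  ext u
  rw [adjoint_apply_single_one_apply hA, if_neg fun hu => ht ⟨u, hu⟩]
  rfl

lemma adjoint_apply_single_one_of_apply_eq
    (hA : ∀ s, A (lp.single 2 s 1) = lp.single 2 (f s) 1) (hf : Injective f) {t w : α}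
    (hw : f w = t) : adjoint A (lp.single 2 t 1) = lp.single 2 w 1 := by
  ext u
  rw [adjoint_apply_single_one_apply hA, lp.single_apply, ← hw]
  simp [hf.eq_iff, Pi.single_apply]

end

theorem stmt16_general {G : Type*} [Group G] (P : Submonoid G) [DecidableEq P]
    (V : P → (lp (fun _ : P => ℂ) 2 →L[ℂ] lp (fun _ : P => ℂ) 2))
    (hV : ∀ p s : P, V p (lp.single 2 s (1 : ℂ)) = lp.single 2 (p * s) (1 : ℂ))
    (p₁ q₁ p₂ q₂ : P)
    (hne : (ContinuousLinearMap.adjoint (V p₁)).comp ((V q₁).comp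
      ((ContinuousLinearMap.adjoint (V p₂)).comp (V q₂))) ≠ 0) :
    {y : P | q₂ * y ∈ (fun z => p₂ * z) ''
      {z : P | q₁ * z ∈ (fun w => p₁ * w) '' (Set.univ : Set P)}}.Nonempty := by
  obtain ⟨s, hs⟩ := not_forall.mp (mt (lp.eq_zero_of_forall_apply_single_one _) hne)
  simp only [ContinuousLinearMap.comp_apply, hV] at hs
  obtain ⟨z, hz⟩ : q₂ * s ∈ range (p₂ * ·) := by
    by_contra hz
    simp [adjoint_apply_single_one_of_notMem_range (hV p₂) hz] at hs
  rw [adjoint_apply_single_one_of_apply_eq (hV p₂) (mul_right_injective p₂) hz, hV] at hs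
  obtain ⟨w, hw⟩ : q₁ * z ∈ range (p₁ * ·) := by
    by_contra hw
    exact hs (adjoint_apply_single_one_of_notMem_range (hV p₁) hw)
  exact ⟨s, z, ⟨w, trivial, hw⟩, hz⟩

/-- If `p₁⁻¹q₁p₂⁻¹q₂ = e` in `G` and the operator `V_{p₁}* V_{q₁} V_{p₂}* V_{q₂}` on
`ℓ²(P)` is nonzero, then the constructible ideal `q₂⁻¹(p₂(q₁⁻¹(p₁P)))` is nonempty. -/
theorem stmt16 {G : Type*} [Group G] (P : Submonoid G) [DecidableEq P]
    (V : P → (lp (fun _ : P => ℂ) 2 →L[ℂ] lp (fun _ : P => ℂ) 2))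
    (hV : ∀ p s : P, V p (lp.single 2 s (1 : ℂ)) = lp.single 2 (p * s) (1 : ℂ))
    (p₁ q₁ p₂ q₂ : P) (h : (p₁ : G)⁻¹ * q₁ * (p₂ : G)⁻¹ * q₂ = 1)
    (hne : (ContinuousLinearMap.adjoint (V p₁)).comp ((V q₁).comp
      ((ContinuousLinearMap.adjoint (V p₂)).comp (V q₂))) ≠ 0) :
    {y : P | q₂ * y ∈ (fun z => p₂ * z) ''
      {z : P | q₁ * z ∈ (fun w => p₁ * w) '' (Set.univ : Set P)}}.Nonempty :=
  stmt16_general P V hV p₁ q₁ p₂ q₂ hne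
end

section
/- Let P be a left-cancellative monoid, H a Hilbert space, and t : P → B(H) a map with t(e) = 1, t(p)t(q) = t(pq), and t(p)*t(p) = 1 for all p, q ∈ P (an isometric representation of P). Then the map W : ℓ²(P) ⊗ H → H ⊗ ℓ²(P) determined by W(δ_q ⊗ h) = t(q)h ⊗ δ_q is a well-defined isometry satisfying W (V_p ⊗ I_H) = (t(p) ⊗ V_p) W for all p ∈ P, where V_p δ_s = δ_{ps} on ℓ²(P). -/
/-!
Since `t(q)* t(q) = 1`, each `t(q)` is an isometry, so the diagonal operator with entries `t(q)`
is an isometry of `ℓ²(P, H)`. Both sides of the intertwining relation are bounded operators, and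
on `δ_q ⊗ h` they give `t(pq)h ⊗ δ_{pq}` and `t(p)t(q)h ⊗ δ_{pq}`; these agree by
multiplicativity of `t`, and the vectors `δ_q ⊗ h` span a dense subspace.
-/

open scoped ENNReal

namespace lp

variable {𝕜 α : Type*} [NormedField 𝕜] {E F : α → Type*}
  [∀ i, NormedAddCommGroup (E i)] [∀ i, NormedSpace 𝕜 (E i)]
  [∀ i, NormedAddCommGroup (F i)] [∀ i, NormedSpace 𝕜 (F i)]
  {p : ℝ≥0∞} [Fact (1 ≤ p)]

def mapLinearIsometry (T : ∀ i, E i →ₗᵢ[𝕜] F i) : lp E p →ₗᵢ[𝕜] lp F p where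
  toFun x := ⟨fun i => T i (x i), Memℓp.of_norm <| by simpa using (lp.memℓp x).norm⟩
  map_add' x y := lp.ext <| funext fun i => map_add (T i) (x i) (y i)
  map_smul' c x := lp.ext <| funext fun i => map_smul (T i) c (x i)
  norm_map' x :=
    have hp : p ≠ 0 := (zero_lt_one.trans_le (Fact.out : 1 ≤ p)).ne'
    le_antisymm (lp.norm_mono hp fun i => by simp) (lp.norm_mono hp fun i => by simp)

@[simp]
theorem mapLinearIsometry_apply (T : ∀ i, E i →ₗᵢ[𝕜] F i) (x : lp E p) (i : α) :
    mapLinearIsometry T x i = T i (x i) :=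
  rfl

theorem mapLinearIsometry_single [DecidableEq α] (T : ∀ i, E i →ₗᵢ[𝕜] F i) (i : α) (a : E i) :
    mapLinearIsometry T (lp.single p i a) = lp.single p i (T i a) := by
  ext j
  by_cases hj : j = i
  · subst hj
    simp
  · simp [hj]

end lp

theorem stmt17_general {P : Type*} [Monoid P] [DecidableEq P]
    {H : Type*} [NormedAddCommGroup H] [InnerProductSpace ℂ H] [CompleteSpace H]
    (t : P → (H →L[ℂ] H))
    (htm : ∀ p q : P, (t p).comp (t q) = t (p * q))
    (hti : ∀ p : P, (ContinuousLinearMap.adjoint (t p)).comp (t p) = 1) :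
    ∃ W : lp (fun _ : P => H) 2 →ₗᵢ[ℂ] lp (fun _ : P => H) 2,
      (∀ (q : P) (h : H), W (lp.single 2 q h) = lp.single 2 q (t q h)) ∧
      (∀ (p : P) (Vp Tp : lp (fun _ : P => H) 2 →L[ℂ] lp (fun _ : P => H) 2),
        (∀ (q : P) (h : H), Vp (lp.single 2 q h) = lp.single 2 (p * q) h) →
        (∀ (q : P) (h : H), Tp (lp.single 2 q h) = lp.single 2 (p * q) (t p h)) →
        ∀ x, W (Vp x) = Tp (W x)) := by
  let T : P → (H →ₗᵢ[ℂ] H) := fun q =>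
    ⟨t q, (t q).norm_map_iff_adjoint_comp_self.mpr (hti q)⟩
  let W : lp (fun _ : P => H) 2 →ₗᵢ[ℂ] lp (fun _ : P => H) 2 := lp.mapLinearIsometry T
  refine ⟨W, fun q h => lp.mapLinearIsometry_single T q h, ?_⟩
  intro p Vp Tp hVp hTp x
  have hcomm : W.toContinuousLinearMap ∘L Vp = Tp ∘L W.toContinuousLinearMap := by
    refine lp.ext_continuousLinearMap ENNReal.ofNat_ne_top fun q => ?_
    ext h
    simp [W, T, hVp, hTp, lp.mapLinearIsometry_single, ← htm]
  exact congr($hcomm x)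

/-- For an isometric representation `t` of a left-cancellative monoid `P` on a Hilbert
space `H`, the map `W : ℓ²(P) ⊗ H → H ⊗ ℓ²(P)` (both modelled as `ℓ²(P, H)`) with
`W(δ_q ⊗ h) = t(q)h ⊗ δ_q` is a well-defined isometry satisfying
`W (V_p ⊗ I) = (t(p) ⊗ V_p) W` for all `p`. -/
theorem stmt17 {P : Type*} [Monoid P] [IsLeftCancelMul P] [DecidableEq P]
    {H : Type*} [NormedAddCommGroup H] [InnerProductSpace ℂ H] [CompleteSpace H]
    (t : P → (H →L[ℂ] H)) (ht1 : t 1 = 1)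
    (htm : ∀ p q : P, (t p).comp (t q) = t (p * q))
    (hti : ∀ p : P, (ContinuousLinearMap.adjoint (t p)).comp (t p) = 1) :
    ∃ W : lp (fun _ : P => H) 2 →ₗᵢ[ℂ] lp (fun _ : P => H) 2,
      (∀ (q : P) (h : H), W (lp.single 2 q h) = lp.single 2 q (t q h)) ∧
      (∀ (p : P) (Vp Tp : lp (fun _ : P => H) 2 →L[ℂ] lp (fun _ : P => H) 2),
        (∀ (q : P) (h : H), Vp (lp.single 2 q h) = lp.single 2 (p * q) h) →
        (∀ (q : P) (h : H), Tp (lp.single 2 q h) = lp.single 2 (p * q) (t p h)) →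
        ∀ x, W (Vp x) = Tp (W x)) :=
  stmt17_general t htm hti
end

section
/- Let P be a submonoid of a group G. Suppose p₁, q₁, …, p_n, q_n ∈ P and r ∈ P are such that for every j ∈ {1, …, n} the element p_j⁻¹ q_j p_{j+1}⁻¹ q_{j+1} ⋯ p_n⁻¹ q_n · r of G lies in P, and that p₁⁻¹q₁ ⋯ p_n⁻¹q_n = e in G. Then for every j ∈ {1, …, n} the element q_{j}⁻¹ p_{j} q_{j-1}⁻¹ p_{j-1} ⋯ q_1⁻¹ p_1 · r of G also lies in P; in fact q_{j-1}⁻¹ p_{j-1} ⋯ q_1⁻¹ p_1 · r = p_j⁻¹ q_j ⋯ p_n⁻¹ q_n · r in G for each j. -/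
/-! Since the full word `p₁⁻¹q₁ ⋯ p_n⁻¹q_n` is trivial, its prefix ending at `j - 1` is the
inverse of its suffix starting at `j`; and the inverse of that prefix is exactly the reversed word
`q_{j-1}⁻¹p_{j-1} ⋯ q₁⁻¹p₁`. Membership in `P` for index `j` is then the hypothesis for `j + 1`,
or `r ∈ P` when `j = n`. -/

theorem List.prod_reverse_map_inv_mul {G α : Type*} [Group G] (l : List α) (p q : α → G) :
    ((l.map fun i => (q i)⁻¹ * p i).reverse).prod = ((l.map fun i => (p i)⁻¹ * q i).prod)⁻¹ := by
  simp only [List.prod_inv_reverse, List.map_map, Function.comp_def, mul_inv_rev, inv_inv]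

theorem List.range'_one_sub_one_append {j n : ℕ} (h1 : 1 ≤ j) (h2 : j ≤ n + 1) :
    List.range' 1 (j - 1) ++ List.range' j (n + 1 - j) = List.range' 1 n := by
  have := List.range'_append_1 (s := 1) (m := j - 1) (n := n + 1 - j)
  rwa [show 1 + (j - 1) = j by omega, show j - 1 + (n + 1 - j) = n by omega] at this

theorem prod_reverse_prefix_eq_suffix_of_prod_eq_one {G : Type*} [Group G] {n : ℕ}
    (p q : ℕ → G) (htot : ((List.range' 1 n).map fun i => (p i)⁻¹ * q i).prod = 1)
    {j : ℕ} (h1 : 1 ≤ j) (h2 : j ≤ n + 1) :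
    (((List.range' 1 (j - 1)).map fun i => (q i)⁻¹ * p i).reverse).prod
      = ((List.range' j (n + 1 - j)).map fun i => (p i)⁻¹ * q i).prod := by
  rw [List.prod_reverse_map_inv_mul]
  apply inv_eq_of_mul_eq_one_right
  rw [← List.prod_append, ← List.map_append, List.range'_one_sub_one_append h1 h2, htot]

theorem stmt19_general {G : Type*} [Group G] (P : Submonoid G) (n : ℕ) (p q : ℕ → G)
    (r : G) (hr : r ∈ P)
    (htot : ((List.range' 1 n).map (fun i => (p i)⁻¹ * q i)).prod = 1)
    (hmem : ∀ j, 1 ≤ j → j ≤ n →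
      ((List.range' j (n + 1 - j)).map (fun i => (p i)⁻¹ * q i)).prod * r ∈ P) :
    ∀ j, 1 ≤ j → j ≤ n →
      ((((List.range' 1 j).map (fun i => (q i)⁻¹ * p i)).reverse).prod * r ∈ P) ∧
      ((((List.range' 1 (j - 1)).map (fun i => (q i)⁻¹ * p i)).reverse).prod * r
        = ((List.range' j (n + 1 - j)).map (fun i => (p i)⁻¹ * q i)).prod * r) := by
  intro j h1 h2
  have hnext := prod_reverse_prefix_eq_suffix_of_prod_eq_one p q htot
    (j := j + 1) (by omega) (by omega)
  rw [Nat.add_sub_cancel] at hnext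
  refine ⟨?_, by rw [prod_reverse_prefix_eq_suffix_of_prod_eq_one p q htot h1 (by omega)]⟩
  rw [hnext]
  rcases h2.lt_or_eq with hlt | rfl
  · exact hmem (j + 1) (by omega) hlt
  · simpa using hr

/-- If `p₁⁻¹q₁ ⋯ p_n⁻¹q_n = e` in `G` and, for each `j`, the element
`p_j⁻¹q_j ⋯ p_n⁻¹q_n · r` lies in the submonoid `P`, then for each `j ∈ {1, …, n}` the
element `q_j⁻¹p_j ⋯ q₁⁻¹p₁ · r` also lies in `P`, and in fact
`q_{j-1}⁻¹p_{j-1} ⋯ q₁⁻¹p₁ · r = p_j⁻¹q_j ⋯ p_n⁻¹q_n · r` in `G`. -/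
theorem stmt19 {G : Type*} [Group G] (P : Submonoid G) (n : ℕ) (p q : ℕ → G)
    (hp : ∀ i, 1 ≤ i → i ≤ n → p i ∈ P) (hq : ∀ i, 1 ≤ i → i ≤ n → q i ∈ P)
    (r : G) (hr : r ∈ P)
    (htot : ((List.range' 1 n).map (fun i => (p i)⁻¹ * q i)).prod = 1)
    (hmem : ∀ j, 1 ≤ j → j ≤ n →
      ((List.range' j (n + 1 - j)).map (fun i => (p i)⁻¹ * q i)).prod * r ∈ P) :
    ∀ j, 1 ≤ j → j ≤ n →
      ((((List.range' 1 j).map (fun i => (q i)⁻¹ * p i)).reverse).prod * r ∈ P) ∧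
      ((((List.range' 1 (j - 1)).map (fun i => (q i)⁻¹ * p i)).reverse).prod * r
        = ((List.range' j (n + 1 - j)).map (fun i => (p i)⁻¹ * q i)).prod * r) :=
  stmt19_general P n p q r hr htot hmem
end
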